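/- arXiv:1810.03409 — 2 statements merged into one kernel-verified Lean document; each statement's English description precedes it below -/
import Mathlib

section
/- Let n ≥ 6 be an even integer and let π ∈ S_n be such that the permutation graph G_π is connected with domination number n/2. Then exactly one of the vertices 1 and 2 is a leaf of G_π, and exactly one of the vertices n−1 and n is a leaf of G_π. -/
/-- The permutation graph of `π`: vertices `0,…,n-1` (0-indexed version of `1,…,n`),
with `i < j` adjacent iff `π⁻¹ i > π⁻¹ j`. -/
def permGraph {n : ℕ} (π : Equiv.Perm (Fin n)) : SimpleGraph (Fin n) where
  Adj i j := (i < j ∧ π.symm j < π.symm i) ∨ (j < i ∧ π.symm i < π.symm j)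
  symm := by constructor; intro i j h; tauto
  loopless := by constructor; intro i h; rcases h with ⟨h, _⟩ | ⟨h, _⟩ <;> exact lt_irrefl i h

/-- `D` dominates `G`: every vertex is in `D` or adjacent to an element of `D`. -/
def Dominates {V : Type*} (G : SimpleGraph V) (D : Set V) : Prop :=
  ∀ v, v ∈ D ∨ ∃ d ∈ D, G.Adj v d

/-- The domination number: minimum cardinality of a dominating set. -/
noncomputable def domNumber {V : Type*} [Fintype V] (G : SimpleGraph V) : ℕ :=
  sInf {k | ∃ D : Finset V, D.card = k ∧ Dominates G ↑D}

/-- Closed neighborhood `N[x]`. -/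
def closedNbhd {V : Type*} (G : SimpleGraph V) (x : V) : Set V :=
  {y | y = x ∨ G.Adj x y}

/-- Degree of a vertex. -/
noncomputable def deg {V : Type*} (G : SimpleGraph V) (v : V) : ℕ :=
  (G.neighborSet v).ncard

/-!
Let `γ(G) = n / 2`. A minimum dominating set `D` is matched into its complement by Hall's
theorem (a set `A ⊆ D` with fewer than `|A|` neighbours outside `D` could be swapped for them), so
`G` has a perfect matching `m`. If a union `C` of matching edges is dominated by `S`, then `S`
together with an Ore-type dominating set of half of the other vertices dominates `G`, whence
`|C| ≤ 2 |S|`. Applied to the matching edges at `a`, `c`, `d`, where `c ≠ m a` and `d ≠ a` are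
further neighbours of `a` and `m a`, this forces `d = m c`; then `a, m a, c, m c` form a closed
`4`-cycle, impossible in a connected graph with `n ≥ 5`. Hence every matching edge contains a
leaf.

In `G_π`, let `a` be the one of the vertices `1, 2` that comes first in `π`, and `b` the other;
every neighbour of `a` other than `b` is then a neighbour of `b`. If neither is a leaf, the leaf
`m a ≠ b` is adjacent to both; if both are, either `m a = b` and `{a, b}` is a component, or
`m a` is the neighbour of `b`, i.e. `m a = m b`. The same works for `n - 1, n`, with `a` the one
that comes last.
-/

namespace SimpleGraph

section Domination

variable {V : Type*}

def DominatesOn (G : SimpleGraph V) (D T : Finset V) : Prop :=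
  ∀ v ∈ T, v ∈ D ∨ ∃ d ∈ D, G.Adj v d

variable {G : SimpleGraph V}

lemma dominates_iff_dominatesOn_univ [Fintype V] {D : Finset V} :
    Dominates G D ↔ G.DominatesOn D Finset.univ := by
  simp [Dominates, DominatesOn]

lemma domNumber_le_card [Fintype V] {D : Finset V} (hD : G.DominatesOn D Finset.univ) :
    domNumber G ≤ D.card :=
  Nat.sInf_le ⟨D, rfl, dominates_iff_dominatesOn_univ.2 hD⟩

lemma exists_dominatesOn_univ_card_eq_domNumber [Fintype V] :
    ∃ D : Finset V, G.DominatesOn D Finset.univ ∧ D.card = domNumber G := by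
  obtain ⟨D, hcard, hD⟩ :=
    Nat.sInf_mem (s := {k | ∃ D : Finset V, D.card = k ∧ Dominates G ↑D})
      ⟨_, Finset.univ, rfl, fun v => Or.inl (by simp)⟩
  exact ⟨D, dominates_iff_dominatesOn_univ.1 hD, hcard⟩

lemma DominatesOn.union [DecidableEq V] {S C D T : Finset V} (hS : G.DominatesOn S C)
    (hD : G.DominatesOn D T) : G.DominatesOn (S ∪ D) (C ∪ T) := by
  intro v hv
  rcases Finset.mem_union.1 hv with hv | hv
  · rcases hS v hv with h | ⟨d, hd, hadj⟩
    · exact Or.inl (Finset.mem_union_left _ h)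
    · exact Or.inr ⟨d, Finset.mem_union_left _ hd, hadj⟩
  · rcases hD v hv with h | ⟨d, hd, hadj⟩
    · exact Or.inl (Finset.mem_union_right _ h)
    · exact Or.inr ⟨d, Finset.mem_union_right _ hd, hadj⟩

lemma DominatesOn.erase [DecidableEq V] {D T : Finset V} {d : V} (hD : G.DominatesOn D T)
    (hd : ∃ u ∈ T, G.Adj d u) (hN : ∀ u ∈ T, G.Adj d u → u ∈ D) :
    G.DominatesOn (D.erase d) T := by
  intro v hv
  by_cases hvd : v = d
  · subst hvd
    obtain ⟨u, hu, hadj⟩ := hd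
    exact Or.inr ⟨u, Finset.mem_erase.2 ⟨hadj.ne.symm, hN u hu hadj⟩, hadj⟩
  rcases hD v hv with h | ⟨e, he, hadj⟩
  · exact Or.inl (Finset.mem_erase.2 ⟨hvd, h⟩)
  by_cases hed : e = d
  · exact Or.inl (Finset.mem_erase.2 ⟨hvd, hN v hv (hed ▸ hadj.symm)⟩)
  · exact Or.inr ⟨e, Finset.mem_erase.2 ⟨hed, he⟩, hadj⟩

/-- Ore's bound `γ ≤ n / 2`, relative to `T`. -/
lemma exists_dominatesOn_two_mul_card_le [DecidableEq V] {T : Finset V}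
    (hT : ∀ v ∈ T, ∃ u ∈ T, G.Adj v u) :
    ∃ D ⊆ T, 2 * D.card ≤ T.card ∧ G.DominatesOn D T := by
  classical
  obtain ⟨D, hDmem, hmin⟩ := (T.powerset.filter (G.DominatesOn · T)).exists_min_image Finset.card
    ⟨T, Finset.mem_filter.2 ⟨Finset.mem_powerset.2 subset_rfl, fun v hv => Or.inl hv⟩⟩
  simp only [Finset.mem_filter, Finset.mem_powerset] at hDmem hmin
  obtain ⟨hDT, hD⟩ := hDmem
  -- by minimality every `d ∈ D` has a neighbour in `T \ D`
  have hcompl : G.DominatesOn (T \ D) T := by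
    intro v hv
    by_cases hvD : v ∈ D
    · by_contra! h
      have hN : ∀ u ∈ T, G.Adj v u → u ∈ D := fun u hu hadj => by
        by_contra huD
        exact h.2 u (Finset.mem_sdiff.2 ⟨hu, huD⟩) hadj
      have := hmin (D.erase v) ⟨(Finset.erase_subset v D).trans hDT, hD.erase (hT v hv) hN⟩
      exact (Finset.card_erase_lt_of_mem hvD).not_ge this
    · exact Or.inl (Finset.mem_sdiff.2 ⟨hv, hvD⟩)
  have := hmin (T \ D) ⟨Finset.sdiff_subset, hcompl⟩
  rw [Finset.card_sdiff_of_subset hDT] at this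
  exact ⟨D, hDT, by omega, hD⟩

lemma card_le_two_mul_card_of_dominatesOn [Fintype V] [DecidableEq V]
    (hγ : Fintype.card V ≤ 2 * domNumber G) {S C : Finset V} (hS : G.DominatesOn S C)
    (hout : ∀ v ∉ C, ∃ u ∉ C, G.Adj v u) : C.card ≤ 2 * S.card := by
  obtain ⟨D, -, hDcard, hD⟩ := exists_dominatesOn_two_mul_card_le (G := G) (T := Cᶜ)
    (by simpa using hout)
  have := domNumber_le_card (by simpa using hS.union hD)
  have := Finset.card_union_le S D
  have := Finset.card_compl C
  have := Finset.card_le_univ C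
  omega

end Domination

lemma deg_eq_one_iff {V : Type*} {G : SimpleGraph V} {v w : V} (h : G.Adj v w) :
    deg G v = 1 ↔ ∀ u, G.Adj v u → u = w := by
  rw [deg, Set.ncard_eq_one]
  constructor
  · rintro ⟨x, hx⟩ u hu
    have hw : w ∈ G.neighborSet v := h
    have hu : u ∈ G.neighborSet v := hu
    rw [hx, Set.mem_singleton_iff] at hw hu
    exact hu.trans hw.symm
  · exact fun H => ⟨w, Set.eq_singleton_iff_unique_mem.2 ⟨h, H⟩⟩

lemma exists_adj_ne_of_deg_ne_one {V : Type*} {G : SimpleGraph V} {v w : V} (h : G.Adj v w)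
    (hv : deg G v ≠ 1) : ∃ u, G.Adj v u ∧ u ≠ w := by
  by_contra! H
  exact hv ((deg_eq_one_iff h).2 H)

lemma Connected.card_le_of_forall_adj_mem {V : Type*} [Fintype V] {G : SimpleGraph V}
    (hconn : G.Connected) {K : Finset V} {a : V} (ha : a ∈ K)
    (hK : ∀ u ∈ K, ∀ v, G.Adj u v → v ∈ K) : Fintype.card V ≤ K.card := by
  refine Finset.card_le_card fun v _ => ?_
  by_contra hv
  obtain ⟨p⟩ := hconn.preconnected a v
  obtain ⟨d, -, hd₁, hd₂⟩ := p.exists_boundary_dart (K : Set V) ha hv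
  exact hd₂ (hK _ hd₁ _ d.adj)

section Matching

variable {V : Type*}

/-- A perfect matching, recorded by the map sending each vertex to its partner. -/
structure IsMatchingInvolution (G : SimpleGraph V) (m : V → V) : Prop where
  involutive : Function.Involutive m
  adj : ∀ v, G.Adj v (m v)

lemma IsMatchingInvolution.injective {G : SimpleGraph V} {m : V → V}
    (hm : G.IsMatchingInvolution m) : Function.Injective m :=
  hm.involutive.injective

lemma exists_isMatchingInvolution_of_equiv {G : SimpleGraph V} {p : V → Prop} [DecidablePred p]
    (e : {v // p v} ≃ {v // ¬ p v}) (he : ∀ a : {v // p v}, G.Adj a (e a)) :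
    ∃ m, G.IsMatchingInvolution m := by
  refine ⟨fun v => if h : p v then e ⟨v, h⟩ else e.symm ⟨v, h⟩, fun v => ?_, fun v => ?_⟩
  · by_cases h : p v
    · simp [h, (e ⟨v, h⟩).2]
    · simp [h, (e.symm ⟨v, h⟩).2]
  · by_cases h : p v
    · simpa [h] using he ⟨v, h⟩
    · simpa [h] using (he (e.symm ⟨v, h⟩)).symm

variable [Fintype V] [DecidableEq V] {G : SimpleGraph V}

lemma exists_injective_adj_notMem (hiso : ∀ v, ∃ u, G.Adj v u) {D : Finset V}
    (hD : G.DominatesOn D Finset.univ) (hmin : D.card = domNumber G) :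
    ∃ f : D → V, Function.Injective f ∧ ∀ a, f a ∉ D ∧ G.Adj a (f a) := by
  classical
  have hout : ∀ v ∈ D, ∃ u ∉ D, G.Adj v u := by
    intro v hv
    by_contra! h
    have := domNumber_le_card (hD.erase (by simpa using hiso v) fun u _ hadj => by
      by_contra hu
      exact h u hu hadj)
    exact (Finset.card_erase_lt_of_mem hv).not_ge (hmin ▸ this)
  let t : D → Finset V := fun a => G.neighborFinset a \ D
  suffices hall : ∀ A : Finset D, A.card ≤ (A.biUnion t).card by
    obtain ⟨f, hf, hft⟩ := (Finset.all_card_le_biUnion_card_iff_exists_injective t).1 hall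
    exact ⟨f, hf, fun a => by simpa [t, and_comm] using hft a⟩
  intro A
  -- replacing `A` by its outside neighbours keeps `D` dominating
  have hB : G.DominatesOn ((D \ A.image Subtype.val) ∪ A.biUnion t) Finset.univ := by
    intro v _
    by_cases hvA : v ∈ A.image Subtype.val
    · obtain ⟨a, ha, rfl⟩ := Finset.mem_image.1 hvA
      obtain ⟨u, huD, hadj⟩ := hout a a.2
      refine Or.inr ⟨u, Finset.mem_union_right _ (Finset.mem_biUnion.2 ⟨a, ha, ?_⟩), hadj⟩
      simp [t, hadj, huD]
    by_cases hvD : v ∈ D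
    · exact Or.inl (Finset.mem_union_left _ (Finset.mem_sdiff.2 ⟨hvD, hvA⟩))
    obtain hv | ⟨d, hd, hadj⟩ := hD v (Finset.mem_univ v)
    · exact absurd hv hvD
    by_cases hdA : d ∈ A.image Subtype.val
    · obtain ⟨a, ha, rfl⟩ := Finset.mem_image.1 hdA
      refine Or.inl (Finset.mem_union_right _ (Finset.mem_biUnion.2 ⟨a, ha, ?_⟩))
      simp [t, hadj.symm, hvD]
    · exact Or.inr ⟨d, Finset.mem_union_left _ (Finset.mem_sdiff.2 ⟨hd, hdA⟩), hadj⟩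
  have hAD : A.image Subtype.val ⊆ D := fun v hv => by
    obtain ⟨a, -, rfl⟩ := Finset.mem_image.1 hv
    exact a.2
  have := domNumber_le_card hB
  have := Finset.card_union_le (D \ A.image Subtype.val) (A.biUnion t)
  have := Finset.card_le_card hAD
  rw [Finset.card_sdiff_of_subset hAD, Finset.card_image_of_injective _ Subtype.val_injective] at *
  omega

theorem exists_isMatchingInvolution (hiso : ∀ v, ∃ u, G.Adj v u)
    (hγ : Fintype.card V ≤ 2 * domNumber G) : ∃ m, G.IsMatchingInvolution m := by
  obtain ⟨D, hD, hcard⟩ := exists_dominatesOn_univ_card_eq_domNumber (G := G)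
  obtain ⟨f, hf, hfD⟩ := exists_injective_adj_notMem hiso hD hcard
  let g : {v // v ∈ D} → {v // v ∉ D} := fun a => ⟨f a, (hfD a).1⟩
  have hg : Function.Injective g := fun a b h => hf (congrArg Subtype.val h)
  have hcard' : Fintype.card {v // v ∈ D} = Fintype.card {v // v ∉ D} := by
    have := Fintype.card_le_of_injective g hg
    rw [Fintype.card_subtype_compl, Fintype.card_coe] at this ⊢
    omega
  exact exists_isMatchingInvolution_of_equiv
    (Equiv.ofBijective g ((Fintype.bijective_iff_injective_and_card g).2 ⟨hg, hcard'⟩))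
    fun a => (hfD a).2

namespace IsMatchingInvolution

variable {m : V → V}

lemma card_le_two_mul_card (hm : G.IsMatchingInvolution m)
    (hγ : Fintype.card V ≤ 2 * domNumber G) {S C : Finset V} (hC : ∀ v ∈ C, m v ∈ C)
    (hS : G.DominatesOn S C) : C.card ≤ 2 * S.card :=
  card_le_two_mul_card_of_dominatesOn hγ hS fun v hv =>
    ⟨m v, fun h => hv (hm.involutive v ▸ hC _ h), hm.adj v⟩

lemma eq_of_adj_of_adj (hm : G.IsMatchingInvolution m) (hγ : Fintype.card V ≤ 2 * domNumber G)
    {a c d : V} (hac : G.Adj a c) (hc : c ≠ m a) (hd : G.Adj (m a) d) (hda : d ≠ a) :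
    d = m c := by
  by_contra hdc
  -- `{c, d}` dominates the matching edges at `a`, `c`, `d`: at least `3` vertices if `c = d`,
  -- at least `5` otherwise
  set C : Finset V := {a, m a, c, m c, d, m d}
  have hC : ∀ v ∈ C, m v ∈ C := by
    simp only [C, Finset.mem_insert, Finset.mem_singleton]
    rintro v (rfl | rfl | rfl | rfl | rfl | rfl) <;> simp [hm.involutive _]
  have hS : G.DominatesOn {c, d} C := by
    simp only [DominatesOn, C, Finset.mem_insert, Finset.mem_singleton]
    rintro v (rfl | rfl | rfl | rfl | rfl | rfl)
    · exact Or.inr ⟨c, by simp, hac⟩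
    · exact Or.inr ⟨d, by simp, hd⟩
    · exact Or.inl (Or.inl rfl)
    · exact Or.inr ⟨c, by simp, (hm.adj c).symm⟩
    · exact Or.inl (Or.inr rfl)
    · exact Or.inr ⟨d, by simp, (hm.adj d).symm⟩
  have hle := hm.card_le_two_mul_card hγ hC hS
  have hac' : a ≠ c := hac.ne
  have ha : a ≠ m a := (hm.adj a).ne
  have hc' : c ≠ m c := (hm.adj c).ne
  have hmc : m c ≠ a := fun h => hc (h ▸ (hm.involutive c).symm)
  have hmc' : m c ≠ m a := fun h => hac' (hm.injective h).symm
  have hd' : m a ≠ d := hd.ne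
  rcases eq_or_ne c d with rfl | hcd
  · have h3 := Finset.card_le_card (show {a, m a, c} ⊆ C by
      intro v; simp only [C, Finset.mem_insert, Finset.mem_singleton]; tauto)
    rw [Finset.card_eq_three.2 ⟨a, m a, c, ha, hac', hc.symm, rfl⟩] at h3
    rw [Finset.pair_eq_singleton, Finset.card_singleton] at hle
    omega
  · have h5 := Finset.card_le_card (show {a, m a, c, m c, d} ⊆ C by
      intro v; simp only [C, Finset.mem_insert, Finset.mem_singleton]; tauto)
    have h5' : ({a, m a, c, m c, d} : Finset V).card = 5 := by
      simp [Finset.card_insert_of_notMem, *, Ne.symm]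
    have := Finset.card_le_two (a := c) (b := d)
    omega

lemma eq_or_eq_of_adj (hm : G.IsMatchingInvolution m) (hγ : Fintype.card V ≤ 2 * domNumber G)
    {a c d : V} (hac : G.Adj a c) (hc : c ≠ m a) (hd : G.Adj (m a) d) (hda : d ≠ a) {v : V}
    (hv : G.Adj a v) : v = m a ∨ v = c := by
  refine or_iff_not_imp_left.2 fun hva => hm.injective ?_
  rw [← hm.eq_of_adj_of_adj hγ hv hva hd hda, hm.eq_of_adj_of_adj hγ hac hc hd hda]

/-- If neither end of the matching edge `a, m a` is a leaf, then `a, m a, c, m c` is a closed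
`4`-cycle. -/
lemma card_le_four (hm : G.IsMatchingInvolution m) (hγ : Fintype.card V ≤ 2 * domNumber G)
    (hconn : G.Connected) {a c d : V} (hac : G.Adj a c) (hc : c ≠ m a) (hd : G.Adj (m a) d)
    (hda : d ≠ a) : Fintype.card V ≤ 4 := by
  have hmd : G.Adj (m a) (m c) := hm.eq_of_adj_of_adj hγ hac hc hd hda ▸ hd
  have hmca : m c ≠ a := fun h => hc (h ▸ (hm.involutive c).symm)
  have hcma : m a ≠ c := hc.symm
  have hmcma : m a ≠ m c := hmd.ne
  refine (hconn.card_le_of_forall_adj_mem (K := {a, m a, c, m c}) (a := a) (by simp)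
    fun u hu v huv => ?_).trans Finset.card_le_four
  simp only [Finset.mem_insert, Finset.mem_singleton] at hu ⊢
  rcases hu with rfl | rfl | rfl | rfl
  · have := hm.eq_or_eq_of_adj hγ hac hc hd hda huv
    tauto
  · have := hm.eq_or_eq_of_adj hγ hmd (by rwa [hm.involutive]) (by rwa [hm.involutive]) hc huv
    rw [hm.involutive] at this
    tauto
  · have := hm.eq_or_eq_of_adj hγ hac.symm hmca.symm hmd.symm hcma huv
    tauto
  · have := hm.eq_or_eq_of_adj hγ hmd.symm (by rwa [hm.involutive])
      (by rw [hm.involutive]; exact hac.symm) hmca.symm huv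
    rw [hm.involutive] at this
    tauto

lemma deg_eq_one_or_deg_eq_one (hm : G.IsMatchingInvolution m)
    (hγ : Fintype.card V ≤ 2 * domNumber G) (hconn : G.Connected) (hcard : 5 ≤ Fintype.card V)
    (a : V) : deg G a = 1 ∨ deg G (m a) = 1 := by
  by_contra! h
  obtain ⟨c, hac, hc⟩ := exists_adj_ne_of_deg_ne_one (hm.adj a) h.1
  obtain ⟨d, hd, hda⟩ := exists_adj_ne_of_deg_ne_one (hm.adj (m a)) h.2
  rw [hm.involutive] at hda
  have := hm.card_le_four hγ hconn hac hc hd hda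
  omega

end IsMatchingInvolution

end Matching

theorem xor_deg_eq_one_of_adj_imp_adj {V : Type*} [Fintype V] [DecidableEq V]
    {G : SimpleGraph V} (hconn : G.Connected) (hcard : 5 ≤ Fintype.card V)
    (hγ : Fintype.card V ≤ 2 * domNumber G) {a b : V} (hab : a ≠ b)
    (hsub : ∀ y, y ≠ b → G.Adj y a → G.Adj y b) : Xor (deg G a = 1) (deg G b = 1) := by
  have : Nontrivial V := Fintype.one_lt_card_iff_nontrivial.1 (by omega)
  obtain ⟨m, hm⟩ := exists_isMatchingInvolution hconn.preconnected.exists_adj_of_nontrivial hγ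
  suffices ¬(deg G a = 1 ∧ deg G b = 1) ∧ ¬(deg G a ≠ 1 ∧ deg G b ≠ 1) by
    unfold Xor
    tauto
  refine ⟨fun ⟨ha, hb⟩ => ?_, fun ⟨ha, hb⟩ => ?_⟩
  · have hma := (deg_eq_one_iff (hm.adj a)).1 ha
    have hmb := (deg_eq_one_iff (hm.adj b)).1 hb
    by_cases hab' : m a = b
    · have := hconn.card_le_of_forall_adj_mem (K := {a, b}) (a := a) (by simp)
        fun u hu v huv => by
          simp only [Finset.mem_insert, Finset.mem_singleton] at hu ⊢
          rcases hu with rfl | rfl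
          · exact Or.inr (hab' ▸ hma v huv)
          · exact Or.inl (by rw [hmb v huv, ← hab', hm.involutive])
      have := Finset.card_le_two (a := a) (b := b)
      omega
    · exact hab (hm.injective (hmb _ (hsub _ hab' (hm.adj a).symm).symm))
  · have hma := (hm.deg_eq_one_or_deg_eq_one hγ hconn hcard a).resolve_left ha
    have hab' : m a ≠ b := fun h => hb (h ▸ hma)
    exact hab ((deg_eq_one_iff (hm.adj a).symm).1 hma b (hsub _ hab' (hm.adj a).symm)).symm

end SimpleGraph

section PermGraph

variable {n : ℕ} {π : Equiv.Perm (Fin n)}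

lemma permGraph_adj_of_forall_lt {i j : Fin n} (hσ : π.symm i < π.symm j)
    (hlt : ∀ y, y ≠ i → y ≠ j → i < y ∧ j < y) {y : Fin n} (hyj : y ≠ j)
    (hyi : (permGraph π).Adj y i) : (permGraph π).Adj y j := by
  obtain ⟨hi, hj⟩ := hlt y hyi.ne hyj
  rcases hyi with ⟨h, -⟩ | ⟨-, h⟩
  · exact absurd hi h.not_gt
  · exact Or.inr ⟨hj, h.trans hσ⟩

lemma permGraph_adj_of_forall_gt {i j : Fin n} (hσ : π.symm j < π.symm i)
    (hgt : ∀ y, y ≠ i → y ≠ j → y < i ∧ y < j) {y : Fin n} (hyj : y ≠ j)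
    (hyi : (permGraph π).Adj y i) : (permGraph π).Adj y j := by
  obtain ⟨hi, hj⟩ := hgt y hyi.ne hyj
  rcases hyi with ⟨-, h⟩ | ⟨h, -⟩
  · exact Or.inl ⟨hj, hσ.trans h⟩
  · exact absurd hi h.not_gt

theorem permGraph_xor_deg_eq_one (hconn : (permGraph π).Connected) (hn : 5 ≤ n)
    (hγ : n ≤ 2 * domNumber (permGraph π)) {i j : Fin n} (hij : i ≠ j)
    (hext : (∀ y, y ≠ i → y ≠ j → i < y ∧ j < y) ∨
      (∀ y, y ≠ i → y ≠ j → y < i ∧ y < j)) :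
    Xor (deg (permGraph π) i = 1) (deg (permGraph π) j = 1) := by
  have key {a b : Fin n} (hab : a ≠ b) := SimpleGraph.xor_deg_eq_one_of_adj_imp_adj hconn
    (by simpa using hn) (by simpa using hγ) hab
  rcases lt_or_gt_of_ne (π.symm.injective.ne hij) with hσ | hσ <;> rcases hext with h | h
  · exact key hij fun _ => permGraph_adj_of_forall_lt hσ h
  · exact (key hij.symm fun _ =>
      permGraph_adj_of_forall_gt hσ fun y hj hi => (h y hi hj).symm).symm
  · exact (key hij.symm fun _ =>
      permGraph_adj_of_forall_lt hσ fun y hj hi => (h y hi hj).symm).symm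
  · exact key hij fun _ => permGraph_adj_of_forall_gt hσ h

end PermGraph

theorem half_domination_extremal_leaves {n : ℕ} (hn : 6 ≤ n) (hev : Even n)
    (π : Equiv.Perm (Fin n)) (hconn : (permGraph π).Connected)
    (hdom : domNumber (permGraph π) = n / 2) :
    Xor' (deg (permGraph π) ⟨0, by omega⟩ = 1) (deg (permGraph π) ⟨1, by omega⟩ = 1) ∧
    Xor' (deg (permGraph π) ⟨n - 2, by omega⟩ = 1)
      (deg (permGraph π) ⟨n - 1, by omega⟩ = 1) := by
  have hγ : n ≤ 2 * domNumber (permGraph π) := by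
    rw [hdom]
    exact (Nat.two_mul_div_two_of_even hev).ge
  have h01 : (⟨0, by omega⟩ : Fin n) ≠ ⟨1, by omega⟩ := by simp
  have htop : (⟨n - 2, by omega⟩ : Fin n) ≠ ⟨n - 1, by omega⟩ := by
    simp only [ne_eq, Fin.mk.injEq]
    omega
  refine ⟨permGraph_xor_deg_eq_one hconn (by omega) hγ h01 (Or.inl ?_),
    permGraph_xor_deg_eq_one hconn (by omega) hγ htop (Or.inr ?_)⟩ <;>
  · intro y h₁ h₂
    simp only [ne_eq, Fin.ext_iff, Fin.lt_def] at h₁ h₂ ⊢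
    omega
end

section
/- Let G_π be a connected permutation graph on n vertices with domination number k, let D be a minimum dominating set of G_π, and let a ∈ D be the element of D whose position π⁻¹(a) is largest. Let τ ∈ S_{n+1} be obtained from π by inserting the value n+1 immediately to the left of a in the one-line notation of π. Then G_τ is a connected permutation graph on n+1 vertices with domination number k. -/
lemma permGraph_adj {n : ℕ} (π : Equiv.Perm (Fin n)) (i j : Fin n) :
    (permGraph π).Adj i j ↔
      ((i < j ∧ π.symm j < π.symm i) ∨ (j < i ∧ π.symm i < π.symm j)) := Iff.rfl

lemma permGraph_adj_castSucc_last {n : ℕ} (σ : Equiv.Perm (Fin (n + 1))) (v : Fin n) :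
    (permGraph σ).Adj v.castSucc (Fin.last n) ↔ σ.symm (Fin.last n) < σ.symm v.castSucc := by
  simp [permGraph_adj, Fin.castSucc_lt_last, (Fin.castSucc_lt_last v).not_gt]

def permGraphEmbeddingOfPattern {m n : ℕ} (σ : Equiv.Perm (Fin m)) (π : Equiv.Perm (Fin n))
    (pos val : Fin n ↪o Fin m) (h : ∀ i, σ (pos i) = val (π i)) :
    permGraph π ↪g permGraph σ where
  toEmbedding := val.toEmbedding
  map_rel_iff' {i j} := by
    have hsymm : ∀ b, σ.symm (val b) = pos (π.symm b) := fun b => by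
      rw [Equiv.symm_apply_eq, h, Equiv.apply_symm_apply]
    simp only [RelEmbedding.coe_toEmbedding, permGraph_adj, hsymm, OrderEmbedding.lt_iff_lt]

section Domination

variable {V W : Type*} {G : SimpleGraph V} {H : SimpleGraph W}

lemma Dominates.image_hom {D : Set V} (hD : Dominates G D) (φ : G →g H)
    (hout : ∀ w ∉ Set.range φ, ∃ d ∈ D, H.Adj w (φ d)) : Dominates H (φ '' D) := by
  intro w
  by_cases hw : w ∈ Set.range φ
  · obtain ⟨v, rfl⟩ := hw
    rcases hD v with hv | ⟨d, hd, hadj⟩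
    · exact Or.inl (Set.mem_image_of_mem φ hv)
    · exact Or.inr ⟨φ d, Set.mem_image_of_mem φ hd, φ.map_adj hadj⟩
  · obtain ⟨d, hd, hadj⟩ := hout w hw
    exact Or.inr ⟨φ d, Set.mem_image_of_mem φ hd, hadj⟩

lemma Dominates.image_retraction {D : Set W} (hD : Dominates H D) (f : V → W) (r : W → V)
    (hrf : ∀ v, r (f v) = v) (hadj : ∀ v w, H.Adj (f v) w → v = r w ∨ G.Adj v (r w)) :
    Dominates G (r '' D) := by
  intro v
  rcases hD (f v) with hv | ⟨w, hw, hvw⟩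
  · exact Or.inl ⟨f v, hv, hrf v⟩
  · rcases hadj v w hvw with rfl | hadj'
    · exact Or.inl (Set.mem_image_of_mem r hw)
    · exact Or.inr ⟨r w, Set.mem_image_of_mem r hw, hadj'⟩

variable [Fintype V] [Fintype W]

lemma domNumber_le {D : Finset V} (hD : Dominates G D) : domNumber G ≤ D.card :=
  Nat.sInf_le ⟨D, rfl, hD⟩

lemma exists_dominates_card_eq_domNumber (G : SimpleGraph V) :
    ∃ D : Finset V, D.card = domNumber G ∧ Dominates G D :=
  Nat.sInf_mem (s := {k | ∃ D : Finset V, D.card = k ∧ Dominates G ↑D})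
    ⟨_, Finset.univ, rfl, fun v => Or.inl (Finset.mem_coe.2 (Finset.mem_univ v))⟩

lemma domNumber_le_of_retraction [DecidableEq V] (f : V → W) (r : W → V)
    (hrf : ∀ v, r (f v) = v) (hadj : ∀ v w, H.Adj (f v) w → v = r w ∨ G.Adj v (r w)) :
    domNumber G ≤ domNumber H := by
  obtain ⟨D, hcard, hD⟩ := exists_dominates_card_eq_domNumber H
  have hrD : Dominates G ↑(D.image r) := by
    rw [Finset.coe_image]
    exact hD.image_retraction f r hrf hadj
  calc domNumber G ≤ (D.image r).card := domNumber_le hrD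
    _ ≤ D.card := Finset.card_image_le
    _ = domNumber H := hcard

end Domination

lemma SimpleGraph.Connected.of_hom {V W : Type*} {G : SimpleGraph V} {H : SimpleGraph W}
    (hG : G.Connected) (φ : G →g H) (hreach : ∀ w, ∃ v, H.Reachable w (φ v)) : H.Connected := by
  have := hG.nonempty.map φ
  refine ⟨fun w₁ w₂ => ?_⟩
  obtain ⟨v₁, h₁⟩ := hreach w₁
  obtain ⟨v₂, h₂⟩ := hreach w₂
  exact h₁.trans (((hG v₁ v₂).map φ).trans h₂.symm)

section MaxOfDominating

variable {n : ℕ} {π : Equiv.Perm (Fin n)} {D : Finset (Fin n)} {M v : Fin n}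

lemma le_of_forall_symm_le (hD : Dominates (permGraph π) ↑D) (hM : ∀ b ∈ D, b ≤ M)
    (hv : ∀ b ∈ D, π.symm b ≤ π.symm v) : v ≤ M := by
  rcases hD v with hvD | ⟨d, hd, ⟨hvd, -⟩ | ⟨-, hdv⟩⟩
  · exact hM v hvD
  · exact hvd.le.trans (hM d hd)
  · exact absurd (hv d hd) hdv.not_ge

lemma eq_or_adj_of_forall_symm_le (hD : Dominates (permGraph π) ↑D) (hMD : M ∈ D)
    (hM : ∀ b ∈ D, b ≤ M) (hv : ∀ b ∈ D, π.symm b ≤ π.symm v) :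
    v = M ∨ (permGraph π).Adj v M := by
  rcases (le_of_forall_symm_le hD hM hv).eq_or_lt with h | h
  · exact Or.inl h
  · exact Or.inr (Or.inl ⟨h, (hv M hMD).lt_of_ne (π.symm.injective.ne h.ne')⟩)

end MaxOfDominating

section InsertTop

variable {n : ℕ} {π : Equiv.Perm (Fin n)} {τ : Equiv.Perm (Fin (n + 1))} {p : Fin n}

lemma apply_succAbove_of_insert (hτ2 : ∀ i : Fin n, i < p → τ i.castSucc = (π i).castSucc)
    (hτ3 : ∀ i : Fin n, p ≤ i → τ i.succ = (π i).castSucc) (i : Fin n) :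
    τ (p.castSucc.succAbove i) = (π i).castSucc := by
  rcases lt_or_ge i p with h | h
  · rw [Fin.succAbove_of_castSucc_lt _ _ (Fin.castSucc_lt_castSucc_iff.2 h), hτ2 i h]
  · rw [Fin.succAbove_of_le_castSucc _ _ (Fin.castSucc_le_castSucc_iff.2 h), hτ3 i h]

lemma permGraph_adj_castSucc_last_of_insert (hτ1 : τ p.castSucc = Fin.last n)
    (hτ : ∀ i, τ (p.castSucc.succAbove i) = (π i).castSucc) (v : Fin n) :
    (permGraph τ).Adj v.castSucc (Fin.last n) ↔ p ≤ π.symm v := by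
  have hlast : τ.symm (Fin.last n) = p.castSucc := τ.symm_apply_eq.2 hτ1.symm
  have hv : τ.symm v.castSucc = p.castSucc.succAbove (π.symm v) := by
    rw [τ.symm_apply_eq, hτ, Equiv.apply_symm_apply]
  rw [permGraph_adj_castSucc_last, hlast, hv, Fin.lt_succAbove_iff_le_castSucc,
    Fin.castSucc_le_castSucc_iff]

end InsertTop

theorem insert_top_preserves_domination {n k : ℕ} (π : Equiv.Perm (Fin n))
    (τ : Equiv.Perm (Fin (n + 1)))
    (hconn : (permGraph π).Connected)
    (hγ : domNumber (permGraph π) = k)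
    (D : Finset (Fin n)) (hD : Dominates (permGraph π) ↑D) (hcard : D.card = k)
    (a : Fin n) (ha : a ∈ D) (hmax : ∀ b ∈ D, π.symm b ≤ π.symm a)
    (hτ1 : τ (π.symm a).castSucc = Fin.last n)
    (hτ2 : ∀ i : Fin n, i < π.symm a → τ i.castSucc = (π i).castSucc)
    (hτ3 : ∀ i : Fin n, π.symm a ≤ i → τ i.succ = (π i).castSucc) :
    (permGraph τ).Connected ∧ domNumber (permGraph τ) = k := by
  classical
  have hτ := apply_succAbove_of_insert hτ2 hτ3
  let φ := permGraphEmbeddingOfPattern τ π (Fin.succAboveOrderEmb _) Fin.castSuccOrderEmb hτ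
  have hlast := permGraph_adj_castSucc_last_of_insert hτ1 hτ
  have haLast : (permGraph τ).Adj (Fin.last n) a.castSucc := ((hlast a).2 le_rfl).symm
  set M := D.max' ⟨a, ha⟩
  have hcover : ∀ v, π.symm a ≤ π.symm v → v = M ∨ (permGraph π).Adj v M := fun v hv =>
    eq_or_adj_of_forall_symm_le hD (D.max'_mem _) (fun b hb => D.le_max' b hb)
      (fun b hb => (hmax b hb).trans hv)
  refine ⟨hconn.of_hom φ.toHom fun w => ?_, le_antisymm ?_ ?_⟩
  · cases w using Fin.lastCases with
    | last => exact ⟨a, haLast.reachable⟩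
    | cast v => exact ⟨v, .rfl⟩
  · have hDτ : Dominates (permGraph τ) ↑(D.image Fin.castSucc) := by
      rw [Finset.coe_image]
      refine hD.image_hom φ.toHom fun w hw => ⟨a, ha, ?_⟩
      cases w using Fin.lastCases with
      | last => exact haLast
      | cast v => exact absurd ⟨v, rfl⟩ hw
    calc domNumber (permGraph τ) ≤ (D.image Fin.castSucc).card := domNumber_le hDτ
      _ = k := by rw [Finset.card_image_of_injective _ (Fin.castSucc_injective n), hcard]
  · rw [← hγ]
    refine domNumber_le_of_retraction Fin.castSucc (Fin.lastCases M id) (by simp) fun v w hvw => ?_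
    cases w using Fin.lastCases with
    | last => simpa using hcover v ((hlast v).1 hvw)
    | cast u => exact Or.inr (by simpa using φ.map_adj_iff.1 hvw)
end
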